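/- arXiv:2301.02023 — 2 statements merged into one kernel-verified Lean document; each statement's English description precedes it below -/
import Mathlib

section
/- Let Ω be a bounded smooth domain in ℝⁿ with n ≥ 2, let s ∈ (0,1), γ ∈ (0,1), q > 1, λ > 0 and ε > 0. Suppose u is an admissible function such that B(u,φ) = ∫_Ω (λ (u⁺+ε)^{−γ} + (u⁺)^{q}) φ dx for every admissible function φ. Then u ≥ 0 almost everywhere in Ω. -/
open MeasureTheory Real Set Bornology
open scoped RealInnerProductSpace

/-- A function is admissible if it is Lipschitz continuous on `ℝⁿ` and
vanishes outside `Ω`. -/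
def Admissible {n : ℕ} (Ω : Set (EuclideanSpace ℝ (Fin n)))
    (u : EuclideanSpace ℝ (Fin n) → ℝ) : Prop :=
  (∃ K, LipschitzWith K u) ∧ ∀ x ∉ Ω, u x = 0

/-- `∫_Ω |∇u|² dx`. -/
noncomputable def gradSq {n : ℕ} (Ω : Set (EuclideanSpace ℝ (Fin n)))
    (u : EuclideanSpace ℝ (Fin n) → ℝ) : ℝ :=
  ∫ x in Ω, ‖gradient u x‖ ^ 2

/-- The Gagliardo seminorm squared
`[u]² = ∫_{ℝⁿ}∫_{ℝⁿ} |u(x)−u(y)|²/|x−y|^{n+2s} dx dy`. -/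
noncomputable def gagliardoSq (n : ℕ) (s : ℝ)
    (u : EuclideanSpace ℝ (Fin n) → ℝ) : ℝ :=
  ∫ x : EuclideanSpace ℝ (Fin n), ∫ y : EuclideanSpace ℝ (Fin n),
    (u x - u y) ^ 2 / ‖x - y‖ ^ ((n : ℝ) + 2 * s)

/-- The bilinear form of the mixed local-nonlocal operator `−Δ + (−Δ)ˢ`. -/
noncomputable def Bform (n : ℕ) (s : ℝ) (Ω : Set (EuclideanSpace ℝ (Fin n)))
    (u φ : EuclideanSpace ℝ (Fin n) → ℝ) : ℝ :=
  (∫ x in Ω, ⟪gradient u x, gradient φ x⟫) +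
  ∫ x : EuclideanSpace ℝ (Fin n), ∫ y : EuclideanSpace ℝ (Fin n),
    (u x - u y) * (φ x - φ y) / ‖x - y‖ ^ ((n : ℝ) + 2 * s)

/-- The energy functional `I_{λ,ε}` associated to the approximated perturbed
singular problem. -/
noncomputable def energy (n : ℕ) (s : ℝ) (Ω : Set (EuclideanSpace ℝ (Fin n)))
    (γ q lam ε : ℝ) (u : EuclideanSpace ℝ (Fin n) → ℝ) : ℝ :=
  (1 / 2) * gradSq Ω u + (1 / 2) * gagliardoSq n s u
    - (lam / (1 - γ)) * (∫ x in Ω, ((max (u x) 0 + ε) ^ (1 - γ) - ε ^ (1 - γ)))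
    - (1 / (q + 1)) * ∫ x in Ω, (max (u x) 0) ^ (q + 1)

/-- weak solutions of the approximate problem
`−Δu + (−Δ)ˢu = λ(u⁺+ε)^{−γ} + (u⁺)^q` are nonnegative a.e. in `Ω`. -/
theorem stmt7 (n : ℕ) (hn : 2 ≤ n) (s γ q lam ε : ℝ)
    (hs : s ∈ Ioo (0 : ℝ) 1) (hγ : γ ∈ Ioo (0 : ℝ) 1)
    (hq : 1 < q) (hlam : 0 < lam) (hε : 0 < ε)
    (Ω : Set (EuclideanSpace ℝ (Fin n))) (hΩ : IsOpen Ω) (hΩb : IsBounded Ω)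
    (u : EuclideanSpace ℝ (Fin n) → ℝ) (hu : Admissible Ω u)
    (hweak : ∀ φ : EuclideanSpace ℝ (Fin n) → ℝ, Admissible Ω φ →
      Bform n s Ω u φ =
        ∫ x in Ω, (lam * (max (u x) 0 + ε) ^ (-γ) + (max (u x) 0) ^ q) * φ x) :
    ∀ᵐ x ∂(volume.restrict Ω), 0 ≤ u x := by
  obtain ⟨⟨K, hK⟩, hu0⟩ := hu
  set v : EuclideanSpace ℝ (Fin n) → ℝ := fun x => min (u x) 0 with hvdef
  have hucont : Continuous u := hK.continuous
  have hvcont : Continuous v := hucont.min continuous_const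
  have hvadm : Admissible Ω v :=
    ⟨⟨K, hK.min_const 0⟩, fun x hx => by simp [hvdef, hu0 x hx]⟩
  -- pointwise nonnegativity of the local integrand
  have hlocal : ∀ x, 0 ≤ ⟪gradient u x, gradient v x⟫ := by
    intro x
    by_cases hdu : DifferentiableAt ℝ u x
    · by_cases hdv : DifferentiableAt ℝ v x
      · rcases lt_trichotomy (u x) 0 with h | h | h
        · have heq : v =ᶠ[nhds x] u := by
            filter_upwards [(isOpen_lt hucont continuous_const).mem_nhds
              (show u x < 0 from h)] with y hy
            simpa [hvdef] using min_eq_left hy.le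
          rw [heq.gradient_eq]
          exact real_inner_self_nonneg
        · have hmin : IsLocalMin (fun y => u y - v y) x := by
            apply Filter.Eventually.of_forall
            intro y
            have h1 : min (u y) 0 ≤ u y := min_le_left _ _
            simp only [hvdef, h]
            norm_num
          have hfd : fderiv ℝ (fun y => u y - v y) x = 0 := hmin.fderiv_eq_zero
          rw [fderiv_fun_sub hdu hdv, sub_eq_zero] at hfd
          have hg : gradient v x = gradient u x := by
            unfold gradient
            rw [hfd]
          rw [hg]
          exact real_inner_self_nonneg
        · have heq : v =ᶠ[nhds x] (fun _ => (0 : ℝ)) := by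
            filter_upwards [(isOpen_lt continuous_const hucont).mem_nhds
              (show (0 : ℝ) < u x from h)] with y hy
            simpa [hvdef] using min_eq_right hy.le
          rw [heq.gradient_eq, gradient_fun_const, inner_zero_right]
      · rw [gradient_eq_zero_of_not_differentiableAt hdv, inner_zero_right]
    · rw [gradient_eq_zero_of_not_differentiableAt hdu, inner_zero_left]
  -- pointwise nonnegativity of the nonlocal integrand
  have hnl : ∀ x y : EuclideanSpace ℝ (Fin n),
      0 ≤ (u x - u y) * (v x - v y) / ‖x - y‖ ^ ((n : ℝ) + 2 * s) := by
    intro x y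
    apply div_nonneg _ (Real.rpow_nonneg (norm_nonneg _) _)
    rcases le_total (u x) (u y) with h | h
    · have hm : min (u x) 0 ≤ min (u y) 0 := min_le_min h le_rfl
      have h1 : u x - u y ≤ 0 := by linarith
      have h2 : v x - v y ≤ 0 := by simp only [hvdef]; linarith
      nlinarith
    · have hm : min (u y) 0 ≤ min (u x) 0 := min_le_min h le_rfl
      have h1 : (0 : ℝ) ≤ u x - u y := by linarith
      have h2 : (0 : ℝ) ≤ v x - v y := by simp only [hvdef]; linarith
      exact mul_nonneg h1 h2
  have hB : 0 ≤ Bform n s Ω u v := by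
    apply add_nonneg
    · exact integral_nonneg fun x => hlocal x
    · exact integral_nonneg fun x => integral_nonneg fun y => hnl x y
  -- the right-hand side
  set F : EuclideanSpace ℝ (Fin n) → ℝ :=
    fun x => lam * (max (u x) 0 + ε) ^ (-γ) + (max (u x) 0) ^ q with hFdef
  have hFpos : ∀ x, 0 < F x := fun x =>
    add_pos_of_pos_of_nonneg
      (mul_pos hlam (Real.rpow_pos_of_pos (by positivity) _))
      (Real.rpow_nonneg (le_max_right _ _) _)
  have hFcont : Continuous F := by
    apply Continuous.add
    · exact continuous_const.mul
        (((hucont.max continuous_const).add continuous_const).rpow_const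
          (fun x => Or.inl (by show max (u x) 0 + ε ≠ 0; positivity)))
    · exact (hucont.max continuous_const).rpow_const (fun x => Or.inr (by linarith))
  have heq : Bform n s Ω u v = ∫ x in Ω, F x * v x := hweak v hvadm
  have hle : (∫ x in Ω, F x * v x) ≤ 0 :=
    integral_nonpos fun x =>
      mul_nonpos_of_nonneg_of_nonpos (hFpos x).le (min_le_right _ _)
  have hzero : (∫ x in Ω, F x * v x) = 0 := le_antisymm hle (heq ▸ hB)
  -- integrability
  have hint : IntegrableOn (fun x => F x * v x) Ω := by
    have hcomp : IsCompact (closure Ω) := hΩb.isCompact_closure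
    exact ((hFcont.mul hvcont).continuousOn.integrableOn_compact hcomp).mono_set
      subset_closure
  have hintneg : Integrable (fun x => -(F x * v x)) (volume.restrict Ω) := hint.neg
  have hnonneg : 0 ≤ fun x => -(F x * v x) := fun x => by
    have := mul_nonpos_of_nonneg_of_nonpos (hFpos x).le (min_le_right (u x) (0 : ℝ))
    simpa using this
  have hae : (fun x => -(F x * v x)) =ᵐ[volume.restrict Ω] 0 := by
    refine (integral_eq_zero_iff_of_nonneg hnonneg hintneg).mp ?_
    rw [integral_neg, hzero, neg_zero]
  filter_upwards [hae] with x hx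
  have hvx : v x = 0 := by
    have hFx := (hFpos x).ne'
    have : F x * v x = 0 := by
      have := hx
      simp only [Pi.zero_apply] at this
      linarith
    exact (mul_eq_zero.mp this).resolve_left hFx
  have : min (u x) 0 = 0 := hvx
  linarith [min_le_left (u x) (0 : ℝ), this ▸ min_le_left (u x) (0 : ℝ)]
end

section
/- Let Ω be a bounded smooth domain in ℝⁿ with n > 2, let s ∈ (0,1), γ ∈ (0,1), λ > 0, A > 0, and let q satisfy 1 < q < 2* − 1 where 2* := 2n/(n−2). There exists a constant Θ > 0, depending only on n, s, γ, q, λ, Ω and A (in particular independent of ε), such that for every ε ∈ (0,1) the following holds: if u is an admissible function with u ≥ 0 in Ω, B(u,φ) = ∫_Ω (λ (u+ε)^{−γ} + u^{q}) φ dx for every admissible function φ, and I_{λ,ε}(u) ≤ A, then (∫_Ω |∇u|² dx)^{1/2} ≤ Θ. -/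
open MeasureTheory Real Set Bornology
open scoped RealInnerProductSpace

set_option maxHeartbeats 1000000

/-- Young-type inequality: for `0 ≤ a < b`, `v ≥ 0`, `κ > 0`. -/
lemma young_rpow {a b κ v : ℝ} (ha : 0 ≤ a) (hab : a < b) (hκ : 0 < κ) (hv : 0 ≤ v) :
    v ^ a ≤ κ * v ^ b + (κ ^ (-1 / (b - a))) ^ a := by
  set T : ℝ := κ ^ (-1 / (b - a)) with hT
  have hT0 : 0 < T := rpow_pos_of_pos hκ _
  have hb0 : 0 ≤ b := le_of_lt (lt_of_le_of_lt ha hab)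
  rcases le_total v T with h | h
  · have h1 : v ^ a ≤ T ^ a := rpow_le_rpow hv h ha
    have h2 : 0 ≤ κ * v ^ b := mul_nonneg hκ.le (rpow_nonneg hv b)
    linarith
  · have hv0 : 0 < v := lt_of_lt_of_le hT0 h
    have key : v ^ (a - b) ≤ κ := by
      have h1 : v ^ (a - b) ≤ T ^ (a - b) :=
        rpow_le_rpow_of_nonpos hT0 h (by linarith)
      have h2 : T ^ (a - b) = κ := by
        have hba : b - a ≠ 0 := sub_ne_zero.mpr (ne_of_gt hab)
        rw [hT, ← rpow_mul hκ.le]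
        rw [show -1 / (b - a) * (a - b) = 1 by field_simp; ring]
        exact rpow_one κ
      linarith
    have h3 : v ^ a = v ^ b * v ^ (a - b) := by
      rw [← rpow_add hv0]; ring_nf
    have h4 : v ^ b * v ^ (a - b) ≤ v ^ b * κ :=
      mul_le_mul_of_nonneg_left key (rpow_nonneg hv0.le b)
    have h5 : 0 ≤ T ^ a := rpow_nonneg hT0.le a
    nlinarith [rpow_nonneg hv0.le b]

/-- `(v+1)^p ≤ 2^p * (v^p + 1)` for `v ≥ 0`, `p ≥ 0`. -/
lemma add_one_rpow_le {v p : ℝ} (hv : 0 ≤ v) (hp : 0 ≤ p) :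
    (v + 1) ^ p ≤ 2 ^ p * (v ^ p + 1) := by
  have h2 : (0:ℝ) ≤ 2 ^ p := rpow_nonneg (by norm_num) p
  rcases le_total v 1 with h | h
  · have h1 : (v + 1) ^ p ≤ 2 ^ p := rpow_le_rpow (by linarith) (by linarith) hp
    nlinarith [rpow_nonneg hv p]
  · have h1 : (v + 1) ^ p ≤ (2 * v) ^ p := rpow_le_rpow (by linarith) (by linarith) hp
    rw [mul_rpow (by norm_num) hv] at h1
    nlinarith [rpow_nonneg hv p]

lemma Bform_self {n : ℕ} (s : ℝ) (Ω : Set (EuclideanSpace ℝ (Fin n)))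
    (u : EuclideanSpace ℝ (Fin n) → ℝ) :
    Bform n s Ω u u = gradSq Ω u + gagliardoSq n s u := by
  unfold Bform gradSq gagliardoSq
  simp only [real_inner_self_eq_norm_sq, pow_two]

/-- a priori bound, uniform in `ε`, for nonnegative weak
solutions of the approximate problem with energy at most `A`. -/
theorem stmt14 (n : ℕ) (hn : 2 < n) (s γ q lam A : ℝ)
    (hs : s ∈ Ioo (0 : ℝ) 1) (hγ : γ ∈ Ioo (0 : ℝ) 1)
    (hq1 : 1 < q) (hq2 : q < 2 * (n : ℝ) / ((n : ℝ) - 2) - 1)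
    (hlam : 0 < lam) (hA : 0 < A)
    (Ω : Set (EuclideanSpace ℝ (Fin n))) (hΩ : IsOpen Ω) (hΩb : IsBounded Ω) :
    ∃ Θ > (0 : ℝ), ∀ ε ∈ Ioo (0 : ℝ) 1,
      ∀ u : EuclideanSpace ℝ (Fin n) → ℝ, Admissible Ω u →
        (∀ x ∈ Ω, 0 ≤ u x) →
        (∀ φ : EuclideanSpace ℝ (Fin n) → ℝ, Admissible Ω φ →
          Bform n s Ω u φ =
            ∫ x in Ω, (lam * (u x + ε) ^ (-γ) + (u x) ^ q) * φ x) →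
        energy n s Ω γ q lam ε u ≤ A →
        Real.sqrt (gradSq Ω u) ≤ Θ := by
  obtain ⟨hγ0, hγ1⟩ := hγ
  have hq0 : (0:ℝ) < q := by linarith
  have hq10 : (0:ℝ) < q + 1 := by linarith
  have h1γ : (0:ℝ) < 1 - γ := by linarith
  set β : ℝ := 1 / (q + 1) with hβ
  have hβ0 : 0 < β := by rw [hβ]; positivity
  have hβhalf : β < 1/2 := by
    rw [hβ]
    have h2 : (2:ℝ) < q + 1 := by linarith
    exact one_div_lt_one_div_of_lt (by norm_num) h2
  have hc0 : 0 < lam / (1 - γ) := div_pos hlam h1γ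
  have h2b : (0:ℝ) < 2 ^ (q + 1) := rpow_pos_of_pos (by norm_num) _
  set κ : ℝ := (1/2 - β)/2 / (lam / (1 - γ)) / 2 ^ (q + 1) with hκdef
  have hκ0 : 0 < κ := div_pos (div_pos (div_pos (by linarith) (by norm_num)) hc0) h2b
  have hcoef : lam / (1 - γ) * (κ * 2 ^ (q + 1)) = (1/2 - β)/2 := by
    rw [hκdef]
    field_simp
  set T : ℝ := κ ^ (-1 / ((q + 1) - (1 - γ))) with hT
  set Cκ : ℝ := κ * 2 ^ (q + 1) + T ^ (1 - γ) with hCκ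
  have hCκ0 : 0 ≤ Cκ := by
    rw [hCκ]
    exact add_nonneg (mul_nonneg hκ0.le h2b.le) (rpow_nonneg (rpow_nonneg hκ0.le _) _)
  set D : ℝ := A + (lam / (1 - γ)) * (Cκ * (volume Ω).toReal) with hD
  have hD0 : 0 < D := by
    have : 0 ≤ (lam / (1 - γ)) * (Cκ * (volume Ω).toReal) :=
      mul_nonneg hc0.le (mul_nonneg hCκ0 ENNReal.toReal_nonneg)
    rw [hD]; linarith
  refine ⟨Real.sqrt (4 * D / (1 - 2 * β)), Real.sqrt_pos.mpr (div_pos (by linarith) (by linarith)), ?_⟩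
  intro ε hε u hu hupos hweak hen
  obtain ⟨⟨K, hK⟩, hu0out⟩ := hu
  have ucont : Continuous u := hK.continuous
  have hu0 : ∀ x, 0 ≤ u x := fun x => by
    by_cases hx : x ∈ Ω
    · exact hupos x hx
    · rw [hu0out x hx]
  have hεpos : (0:ℝ) < ε := hε.1
  have cpos : ∀ x, 0 < u x + ε := fun x => by have := hu0 x; linarith
  have hcl : IsCompact (closure Ω) := hΩb.isCompact_closure
  have hmeas : MeasurableSet Ω := hΩ.measurableSet
  have hint : ∀ f : EuclideanSpace ℝ (Fin n) → ℝ, Continuous f → IntegrableOn f Ω :=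
    fun f hf => (hf.continuousOn.integrableOn_compact hcl).mono_set subset_closure
  have contQ : Continuous (fun x => u x ^ (q + 1)) :=
    ucont.rpow_const (fun x => Or.inr (by linarith))
  have conth : Continuous (fun x => (lam * (u x + ε) ^ (-γ) + u x ^ q) * u x) := by
    refine Continuous.mul (Continuous.add ?_ ?_) ucont
    · exact continuous_const.mul
        ((ucont.add continuous_const).rpow_const (fun x => Or.inl (ne_of_gt (cpos x))))
    · exact ucont.rpow_const (fun x => Or.inr hq0.le)
  have contP : Continuous (fun x => (u x + ε) ^ (1 - γ) - ε ^ (1 - γ)) :=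
    ((ucont.add continuous_const).rpow_const
      (fun x => Or.inl (ne_of_gt (cpos x)))).sub continuous_const
  have contR : Continuous (fun x => κ * 2 ^ (q + 1) * u x ^ (q + 1) + Cκ) :=
    (continuous_const.mul contQ).add continuous_const
  -- test with φ = u
  have hBuu : gradSq Ω u + gagliardoSq n s u
      = ∫ x in Ω, (lam * (u x + ε) ^ (-γ) + u x ^ q) * u x := by
    rw [← Bform_self]
    exact hweak u ⟨⟨K, hK⟩, hu0out⟩
  -- Q ≤ ∫ h
  have hQle : (∫ x in Ω, u x ^ (q + 1))
      ≤ ∫ x in Ω, (lam * (u x + ε) ^ (-γ) + u x ^ q) * u x := by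
    refine setIntegral_mono_on (hint _ contQ) (hint _ conth) hmeas ?_
    intro x _
    have h1 : 0 ≤ lam * (u x + ε) ^ (-γ) * u x :=
      mul_nonneg (mul_nonneg hlam.le (rpow_nonneg (cpos x).le _)) (hu0 x)
    have h2 : u x ^ q * u x = u x ^ (q + 1) := by
      rcases eq_or_lt_of_le (hu0 x) with h | h
      · rw [← h, zero_rpow (ne_of_gt hq0), zero_rpow (ne_of_gt hq10), zero_mul]
      · rw [rpow_add_one (ne_of_gt h)]
    nlinarith
  -- pointwise bound on the singular term, then integrate
  have hPle : (∫ x in Ω, ((u x + ε) ^ (1 - γ) - ε ^ (1 - γ)))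
      ≤ κ * 2 ^ (q + 1) * (∫ x in Ω, u x ^ (q + 1)) + Cκ * (volume Ω).toReal := by
    have step : (∫ x in Ω, ((u x + ε) ^ (1 - γ) - ε ^ (1 - γ)))
        ≤ ∫ x in Ω, (κ * 2 ^ (q + 1) * u x ^ (q + 1) + Cκ) := by
      refine setIntegral_mono_on (hint _ contP) (hint _ contR) hmeas ?_
      intro x _
      have h1 : (u x + ε) ^ (1 - γ)
          ≤ κ * (u x + ε) ^ (q + 1) + (κ ^ (-1 / ((q + 1) - (1 - γ)))) ^ (1 - γ) :=
        young_rpow (by linarith) (by linarith) hκ0 (cpos x).le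
      have h2 : (u x + ε) ^ (q + 1) ≤ (u x + 1) ^ (q + 1) :=
        rpow_le_rpow (cpos x).le (by linarith [hε.2]) (by linarith)
      have h3 : (u x + 1) ^ (q + 1) ≤ 2 ^ (q + 1) * (u x ^ (q + 1) + 1) :=
        add_one_rpow_le (hu0 x) (by linarith)
      have h4 : 0 ≤ ε ^ (1 - γ) := rpow_nonneg hεpos.le _
      have h5 : κ * (u x + ε) ^ (q + 1) ≤ κ * (2 ^ (q + 1) * (u x ^ (q + 1) + 1)) :=
        mul_le_mul_of_nonneg_left (h2.trans h3) hκ0.le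
      rw [hCκ, hT]
      linarith
    have hCint : IntegrableOn (fun _ : EuclideanSpace ℝ (Fin n) => Cκ) Ω :=
      integrableOn_const hΩb.measure_lt_top.ne
    rw [integral_add ((hint _ contQ).const_mul _) hCint, integral_const_mul,
      setIntegral_const, smul_eq_mul, measureReal_def] at step
    linarith
  -- sign facts
  have hw0 : 0 ≤ gagliardoSq n s u :=
    integral_nonneg fun x => integral_nonneg fun y =>
      div_nonneg (sq_nonneg _) (rpow_nonneg (norm_nonneg _) _)
  have hg0 : 0 ≤ gradSq Ω u := setIntegral_nonneg hmeas fun x _ => sq_nonneg _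
  have hQ0 : 0 ≤ ∫ x in Ω, u x ^ (q + 1) :=
    setIntegral_nonneg hmeas fun x _ => rpow_nonneg (hu0 x) _
  -- rewrite the energy
  have e2 : (∫ x in Ω, (max (u x) 0) ^ (q + 1)) = ∫ x in Ω, u x ^ (q + 1) :=
    setIntegral_congr_fun hmeas fun x hx => by rw [max_eq_left (hupos x hx)]
  unfold energy at hen
  rw [e2] at hen
  have e3 : (∫ x in Ω, ((max (u x) 0 + ε) ^ (1 - γ) - ε ^ (1 - γ)
        - 1 / (q + 1) * ∫ y in Ω, u y ^ (q + 1)))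
      = (∫ x in Ω, ((u x + ε) ^ (1 - γ) - ε ^ (1 - γ)))
        - (volume Ω).toReal * (1 / (q + 1) * ∫ y in Ω, u y ^ (q + 1)) := by
    rw [setIntegral_congr_fun (f := fun x => ((max (u x) 0 + ε) ^ (1 - γ) - ε ^ (1 - γ)
        - 1 / (q + 1) * ∫ y in Ω, u y ^ (q + 1)))
      (g := fun x => ((u x + ε) ^ (1 - γ) - ε ^ (1 - γ)
        - 1 / (q + 1) * ∫ y in Ω, u y ^ (q + 1))) hmeas
      (fun x hx => by simp only [max_eq_left (hupos x hx)])]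
    rw [integral_sub (hint _ contP) (integrableOn_const hΩb.measure_lt_top.ne),
      setIntegral_const, smul_eq_mul, measureReal_def]
  have e4 : (∫ x in Ω, ((max (u x) 0 + ε) ^ (1 - γ) - ε ^ (1 - γ)))
      = ∫ x in Ω, ((u x + ε) ^ (1 - γ) - ε ^ (1 - γ)) :=
    setIntegral_congr_fun hmeas fun x hx => by simp only [max_eq_left (hupos x hx)]
  rw [e4] at hen
  -- final arithmetic
  set g := gradSq Ω u with hg
  set w := gagliardoSq n s u with hw
  set Q := ∫ x in Ω, u x ^ (q + 1) with hQ
  set P := ∫ x in Ω, ((u x + ε) ^ (1 - γ) - ε ^ (1 - γ)) with hP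
  have m1 : (lam / (1 - γ)) * P
      ≤ (1/2 - β)/2 * Q + (lam / (1 - γ)) * (Cκ * (volume Ω).toReal) := by
    have h := mul_le_mul_of_nonneg_left hPle hc0.le
    calc (lam / (1 - γ)) * P
        ≤ (lam / (1 - γ)) * (κ * 2 ^ (q + 1) * Q + Cκ * (volume Ω).toReal) := h
      _ = (1/2 - β)/2 * Q + (lam / (1 - γ)) * (Cκ * (volume Ω).toReal) := by
          rw [mul_add, ← mul_assoc, hcoef]
  have m2 : (1/2 - β)/2 * Q ≤ (1/2 - β)/2 * (g + w) :=
    mul_le_mul_of_nonneg_left (hQle.trans_eq hBuu.symm) (by linarith)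
  have mdrop : 0 ≤ lam / (1 - γ) * ((volume Ω).toReal * (1 / (q + 1) * Q)) :=
    mul_nonneg hc0.le (mul_nonneg ENNReal.toReal_nonneg
      (mul_nonneg (by positivity) hQ0))
  have m3 : 0 ≤ β * (g + w) := mul_nonneg hβ0.le (add_nonneg hg0 hw0)
  have m4 : 1 / (q + 1) * Q ≤ β * (g + w) := by
    rw [← hβ]; exact mul_le_mul_of_nonneg_left (hQle.trans_eq hBuu.symm) hβ0.le
  have hfin : g + w ≤ 4 * D / (1 - 2 * β) := by
    rw [le_div_iff₀ (by linarith), hD]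
    linarith [hen, m1, m2, mdrop, m3, m4]
  have hgle : g ≤ 4 * D / (1 - 2 * β) := by linarith
  exact Real.sqrt_le_sqrt hgle
end
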